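/- For every nonnegative integer n and real number ℓ, the sum over i+j=n of binomial(2i-ℓ,i)*binomial(2j+ℓ,j) equals 4^n. -/

import Mathlib

/-!
Write `S n a b = ∑_{i+j=n} C(2i+a, i) C(2j+b, j)`. Pascal's rule applied to either factor gives
`S (n+1) a b = S n (a+1) b + S (n+1) (a-1) b` and its mirror image, and comparing the two shows by
induction on `n` that `S n (a+1) b = S n a (b+1)`. Hence `ℓ ↦ S n (-ℓ) ℓ` is a polynomial of period
`1`, so it is constant and equals `S n 0 0 = ∑ C(2i,i) C(2j,j)`. Finally
`C(2i,i) = (-4)^i C(-1/2,i)`, and Chu–Vandermonde turns the sum into `(-4)^n C(-1,n) = 4^n`.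
-/

/-- Generalized binomial coefficient with real upper argument. -/
noncomputable def rchoose (x : ℝ) (k : ℕ) : ℝ :=
  (∏ j ∈ Finset.range k, (x - j)) / (Nat.factorial k : ℝ)

open Finset Polynomial

namespace Ring

section Field

variable {K : Type*} [Field K] [CharZero K]

theorem choose_eq_prod_div (a : K) (k : ℕ) :
    choose a k = (∏ j ∈ range k, (a - j)) / k.factorial := by
  rw [choose_eq_smul, ← aeval_eq_smeval, aeval_def, ← eval_map, descPochhammer_map,
    descPochhammer_eval_eq_prod_range, smul_eq_mul, div_eq_inv_mul]

theorem succ_mul_choose_succ (a : K) (k : ℕ) :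
    (k + 1) * choose a (k + 1) = (a - k) * choose a k := by
  rw [choose_eq_prod_div, choose_eq_prod_div, prod_range_succ, Nat.factorial_succ]
  push_cast
  field_simp

theorem centralBinom_eq_neg_four_pow_mul_choose (i : ℕ) :
    (i.centralBinom : K) = (-4) ^ i * choose (-1 / 2 : K) i := by
  induction i with
  | zero => simp
  | succ i ih =>
    refine mul_left_cancel₀ (Nat.cast_add_one_ne_zero i) ?_
    have key := congrArg (Nat.cast : ℕ → K) (Nat.succ_mul_centralBinom_succ i)
    push_cast at key
    rw [key, ih, mul_left_comm ((i : K) + 1), succ_mul_choose_succ]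
    ring

end Field

theorem choose_two_mul_natCast_self {R : Type*} [Ring R] [BinomialRing R] (m : ℕ) :
    choose (2 * m : R) m = m.centralBinom := by
  rw [← Nat.cast_ofNat, ← Nat.cast_mul, choose_natCast, Nat.centralBinom_eq_two_mul_choose]

theorem choose_neg_one {R : Type*} [Ring R] [BinomialRing R] (n : ℕ) :
    choose (-1 : R) n = (-1) ^ n := by
  rw [choose_neg, add_sub_cancel_left, choose_natCast, Nat.choose_self, Nat.cast_one,
    Units.smul_def, zsmul_one, Int.cast_negOnePow_natCast]

end Ring

theorem Nat.sum_antidiagonal_centralBinom_mul (n : ℕ) :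
    ∑ p ∈ antidiagonal n, p.1.centralBinom * p.2.centralBinom = 4 ^ n := by
  apply Nat.cast_injective (R := ℚ)
  calc ((∑ p ∈ antidiagonal n, p.1.centralBinom * p.2.centralBinom : ℕ) : ℚ)
      = ∑ p ∈ antidiagonal n,
          (-4) ^ n * (Ring.choose (-1 / 2 : ℚ) p.1 * Ring.choose (-1 / 2) p.2) := by
        push_cast
        refine sum_congr rfl fun p hp => ?_
        rw [Ring.centralBinom_eq_neg_four_pow_mul_choose,
          Ring.centralBinom_eq_neg_four_pow_mul_choose, ← mem_antidiagonal.mp hp, pow_add]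
        ring
    _ = ((4 ^ n : ℕ) : ℚ) := by
        rw [← mul_sum, ← Ring.add_choose_eq _ (Commute.refl _)]
        norm_num [Ring.choose_neg_one, ← mul_pow]

theorem Polynomial.eq_C_eval_zero_of_comp_X_add_one {R : Type*} [CommRing R] [IsDomain R]
    [CharZero R] {p : R[X]} (hp : p.comp (X + 1) = p) : p = C (p.eval 0) := by
  have hnat (k : ℕ) : p.eval (k : R) = p.eval 0 := by
    induction k with
    | zero => rw [Nat.cast_zero]
    | succ k ih => simpa [ih] using congrArg (eval (k : R)) hp
  refine eq_of_infinite_eval_eq _ _ (Set.infinite_of_injective_forall_mem Nat.cast_injective ?_)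
  simpa using hnat

section Conv

variable {R : Type*} [CommRing R] [BinomialRing R]

noncomputable def centralChooseConv (n : ℕ) (a b : R) : R :=
  ∑ p ∈ antidiagonal n, Ring.choose (2 * p.1 + a) p.1 * Ring.choose (2 * p.2 + b) p.2

theorem centralChooseConv_comm (n : ℕ) (a b : R) :
    centralChooseConv n a b = centralChooseConv n b a := by
  rw [centralChooseConv, ← Nat.sum_antidiagonal_swap, centralChooseConv]
  simp only [Prod.fst_swap, Prod.snd_swap, mul_comm]

theorem centralChooseConv_zero (a b : R) : centralChooseConv 0 a b = 1 := by
  simp [centralChooseConv]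

theorem centralChooseConv_succ_left (n : ℕ) (a b : R) :
    centralChooseConv (n + 1) a b =
      centralChooseConv n (a + 1) b + centralChooseConv (n + 1) (a - 1) b := by
  have pascal (i : ℕ) : Ring.choose (2 * (i + 1 : ℕ) + a) (i + 1) =
      Ring.choose (2 * i + (a + 1)) i + Ring.choose (2 * (i + 1 : ℕ) + (a - 1)) (i + 1) := by
    rw [show 2 * ((i + 1 : ℕ) : R) + a = 2 * i + (a + 1) + 1 by push_cast; ring,
      Ring.choose_succ_succ]
    congr 2
    push_cast
    ring
  simp only [centralChooseConv, Nat.sum_antidiagonal_succ, pascal, add_mul, sum_add_distrib,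
    Nat.cast_zero, Ring.choose_zero_right]
  ring

theorem centralChooseConv_succ_right (n : ℕ) (a b : R) :
    centralChooseConv (n + 1) a b =
      centralChooseConv n a (b + 1) + centralChooseConv (n + 1) a (b - 1) := by
  rw [centralChooseConv_comm (n + 1) a b, centralChooseConv_succ_left, centralChooseConv_comm n,
    centralChooseConv_comm (n + 1)]

theorem centralChooseConv_add_one_left (n : ℕ) (a b : R) :
    centralChooseConv n (a + 1) b = centralChooseConv n a (b + 1) := by
  induction n generalizing a b with
  | zero => simp only [centralChooseConv_zero]
  | succ n ih =>
    have h₁ := centralChooseConv_succ_left n (a + 1) b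
    have h₂ := centralChooseConv_succ_right n a (b + 1)
    rw [add_sub_cancel_right] at h₁ h₂
    rw [h₁, h₂, ih, ih]

theorem map_centralChooseConv {S : Type*} [CommRing S] [BinomialRing S] (f : R →+* S) (n : ℕ)
    (a b : R) : f (centralChooseConv n a b) = centralChooseConv n (f a) (f b) := by
  simp [centralChooseConv, Ring.map_choose, map_ofNat]

end Conv

theorem centralChooseConv_neg_self {K : Type*} [Field K] [CharZero K] (n : ℕ) (ℓ : K) :
    centralChooseConv n (-ℓ) ℓ = centralChooseConv n 0 0 := by
  have heval (x : K) :
      (centralChooseConv n (-X) X : K[X]).eval x = centralChooseConv n (-x) x := by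
    rw [← coe_evalRingHom, map_centralChooseConv, map_neg, coe_evalRingHom, eval_X]
  have hperiodic :
      (centralChooseConv n (-X) X : K[X]).comp (X + 1) = centralChooseConv n (-X) X := by
    rw [← coe_compRingHom_apply, map_centralChooseConv, map_neg, coe_compRingHom_apply, X_comp,
      neg_add, ← sub_eq_add_neg, ← centralChooseConv_add_one_left, sub_add_cancel]
  rw [← heval, Polynomial.eq_C_eval_zero_of_comp_X_add_one hperiodic, eval_C, heval, neg_zero]

theorem centralChooseConv_neg_self_eq_four_pow {K : Type*} [Field K] [CharZero K] (n : ℕ)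
    (ℓ : K) : centralChooseConv n (-ℓ) ℓ = 4 ^ n := by
  rw [centralChooseConv_neg_self, centralChooseConv]
  simp only [add_zero, Ring.choose_two_mul_natCast_self]
  exact_mod_cast Nat.sum_antidiagonal_centralBinom_mul n

theorem rchoose_eq_choose (x : ℝ) (k : ℕ) : rchoose x k = Ring.choose x k :=
  (Ring.choose_eq_prod_div x k).symm

theorem sum_gen_binom_eq_four_pow (n : ℕ) (ℓ : ℝ) :
    ∑ i ∈ Finset.range (n + 1),
      rchoose (2 * (i : ℝ) - ℓ) i * rchoose (2 * ((n - i : ℕ) : ℝ) + ℓ) (n - i)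
      = 4 ^ n := by
  simp_rw [rchoose_eq_choose, sub_eq_add_neg]
  rw [← Nat.sum_antidiagonal_eq_sum_range_succ
    (fun i j => Ring.choose (2 * (i : ℝ) + -ℓ) i * Ring.choose (2 * (j : ℝ) + ℓ) j)]
  exact centralChooseConv_neg_self_eq_four_pow n ℓ
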